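/- arXiv:1602.03471 — 2 statements merged into one kernel-verified Lean document; each statement's English description precedes it below -/
import Mathlib

section
/- In the constant column weight group testing design, conditional on the number M of positive tests, the probability that COMP succeeds equals (1 - (M/T)^L)^{N-K}. -/
/-!
The positive tests are determined by the columns of the defective items alone. Once those
columns are fixed, the `N - K` non-defective columns range freely and independently over the
`T ^ L` possible columns, of which `T ^ L - m ^ L` leave the `m` positive tests. Both counts
therefore factor through the same number of defective configurations, which cancels.
-/

open Finset Classical
noncomputable section
open scoped Classical

/-- In the constant column weight design, each of the `N` items makes `L` uniform
choices (with replacement) among the `T` tests; all such designs are equally likely.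
A test is positive iff some defective item (a member of `𝒦`, with `|𝒦| = K`) chose it. -/
def positiveTests {N L T : ℕ} (𝒦 : Finset (Fin N)) (ω : Fin N → Fin L → Fin T) :
    Finset (Fin T) :=
  𝒦.biUnion fun i => Finset.image (ω i) Finset.univ

/-- COMP succeeds iff every non-defective item appears in some negative test. -/
def compSucceeds {N L T : ℕ} (𝒦 : Finset (Fin N)) (ω : Fin N → Fin L → Fin T) : Prop :=
  ∀ i, i ∉ 𝒦 → ∃ l, ω i l ∉ positiveTests 𝒦 ω

section Counting

variable {α β κ : Type*} [Fintype α] [Fintype β] [Fintype κ] [DecidableEq κ]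

theorem card_filter_forall_mem [DecidableEq β] (S : Finset β) :
    #{g : κ → β | ∀ k, g k ∈ S} = #S ^ Fintype.card κ := by
  have : ({g | ∀ k, g k ∈ S} : Finset (κ → β)) = Fintype.piFinset fun _ => S := by
    ext g; simp [Fintype.mem_piFinset]
  rw [this, Fintype.card_piFinset, prod_const, card_univ]

theorem card_filter_exists_not_mem [DecidableEq β] (S : Finset β) :
    #{g : κ → β | ∃ k, g k ∉ S} = Fintype.card β ^ Fintype.card κ - #S ^ Fintype.card κ := by
  rw [← card_filter_forall_mem, ← Fintype.card_fun, ← card_univ,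
    ← card_filter_add_card_filter_not (s := univ) fun g : κ → β => ∀ k, g k ∈ S]
  simp only [not_forall, add_tsub_cancel_left]

theorem card_filter_prod_pi (P : α → Prop) [DecidablePred P] (Q : α → β → Prop)
    [∀ a, DecidablePred (Q a)] (c : ℕ) (hc : ∀ a, P a → #{b | Q a b} = c) :
    #{x : α × (κ → β) | P x.1 ∧ ∀ k, Q x.1 (x.2 k)} = #{a | P a} * c ^ Fintype.card κ := by
  have fiber (a : α) :
      #{g : κ → β | P a ∧ ∀ k, Q a (g k)} = if P a then c ^ Fintype.card κ else 0 := by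
    split_ifs with ha
    · simpa [ha, hc a ha] using card_filter_forall_mem (κ := κ) {b | Q a b}
    · simp [ha]
  rw [card_filter, Fintype.sum_prod_type]
  simp only [← card_filter]
  simp only [fiber, ← sum_filter, sum_const, smul_eq_mul]

theorem card_filter_restrict_and_forall_not_mem {ι : Type*} [Fintype ι] [DecidableEq ι]
    (s : Finset ι) (P : (s → β) → Prop) [DecidablePred P]
    (Q : (s → β) → β → Prop) [∀ f, DecidablePred (Q f)] (c : ℕ)
    (hc : ∀ f, P f → #{b | Q f b} = c) :
    #{ω : ι → β | P (s.restrict ω) ∧ ∀ i ∉ s, Q (s.restrict ω) (ω i)}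
      = #{f | P f} * c ^ (Fintype.card ι - #s) := by
  rw [← Fintype.card_coe s, ← Fintype.card_subtype_compl, ← card_filter_prod_pi P Q c hc]
  refine card_equiv (Equiv.piEquivPiSubtypeProd (· ∈ s) fun _ => β) fun ω => ?_
  simp only [mem_filter, mem_univ, true_and, Subtype.forall, Equiv.piEquivPiSubtypeProd,
    Equiv.coe_fn_mk]
  rfl

end Counting

def testsHit {ι : Type*} [Fintype ι] {L T : ℕ} (f : ι → Fin L → Fin T) : Finset (Fin T) :=
  univ.biUnion fun i => univ.image (f i)

theorem positiveTests_eq_testsHit_restrict {N L T : ℕ} (𝒦 : Finset (Fin N))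
    (ω : Fin N → Fin L → Fin T) : positiveTests 𝒦 ω = testsHit (𝒦.restrict ω) := by
  ext t
  simp [positiveTests, testsHit, Finset.restrict]

theorem card_filter_card_positiveTests_eq_and {N L T : ℕ} (𝒦 : Finset (Fin N)) (m : ℕ)
    (Q : Finset (Fin T) → (Fin L → Fin T) → Prop) [∀ S, DecidablePred (Q S)] (c : ℕ)
    (hc : ∀ S : Finset (Fin T), #S = m → #{b | Q S b} = c) :
    #{ω : Fin N → Fin L → Fin T | #(positiveTests 𝒦 ω) = m ∧
        ∀ i ∉ 𝒦, Q (positiveTests 𝒦 ω) (ω i)}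
      = #{f : 𝒦 → Fin L → Fin T | #(testsHit f) = m} * c ^ (N - #𝒦) := by
  simp only [positiveTests_eq_testsHit_restrict]
  convert card_filter_restrict_and_forall_not_mem 𝒦 (fun f => #(testsHit f) = m)
    (fun f => Q (testsHit f)) c fun f hf => hc _ hf using 3
  rw [Fintype.card_fin]

theorem card_filter_card_positiveTests_eq_and_compSucceeds {N L T : ℕ} (𝒦 : Finset (Fin N))
    (m : ℕ) :
    #{ω : Fin N → Fin L → Fin T | #(positiveTests 𝒦 ω) = m ∧ compSucceeds 𝒦 ω}
      = #{f : 𝒦 → Fin L → Fin T | #(testsHit f) = m} * (T ^ L - m ^ L) ^ (N - #𝒦) := by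
  have avoids (S : Finset (Fin T)) (hS : #S = m) :
      #{b : Fin L → Fin T | ∃ l, b l ∉ S} = T ^ L - m ^ L := by
    convert card_filter_exists_not_mem S using 3 <;> simp [hS]
  convert card_filter_card_positiveTests_eq_and 𝒦 m _ _ avoids
  rfl

theorem card_filter_card_positiveTests_eq {N L T : ℕ} (𝒦 : Finset (Fin N)) (m : ℕ) :
    #{ω : Fin N → Fin L → Fin T | #(positiveTests 𝒦 ω) = m}
      = #{f : 𝒦 → Fin L → Fin T | #(testsHit f) = m} * (T ^ L) ^ (N - #𝒦) := by
  simpa using card_filter_card_positiveTests_eq_and 𝒦 m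
    (fun (_ : Finset (Fin T)) (_ : Fin L → Fin T) => True) (T ^ L) fun S _ => by simp

/-- Conditional on the number of positive tests being `m`, the probability that COMP
succeeds equals `(1 - (m/T)^L)^(N-K)`.  The conditional probability is the proportion
of equally likely designs with `m` positive tests on which COMP succeeds. -/
theorem comp_conditional_success (N K T L m : ℕ) (hT : 0 < T) (hm : m ≤ T)
    (𝒦 : Finset (Fin N)) (h𝒦 : 𝒦.card = K)
    (hne : (Finset.univ.filter (fun ω : Fin N → Fin L → Fin T =>
        (positiveTests 𝒦 ω).card = m)).Nonempty) :
    ((Finset.univ.filter (fun ω : Fin N → Fin L → Fin T =>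
          (positiveTests 𝒦 ω).card = m ∧ compSucceeds 𝒦 ω)).card : ℝ)
        / ((Finset.univ.filter (fun ω : Fin N → Fin L → Fin T =>
          (positiveTests 𝒦 ω).card = m)).card : ℝ)
      = (1 - ((m : ℝ) / T) ^ L) ^ (N - K) := by
  have hall := card_filter_card_positiveTests_eq (L := L) (T := T) 𝒦 m
  have hD : (#{f : 𝒦 → Fin L → Fin T | #(testsHit f) = m} : ℝ) ≠ 0 := by
    have := hne.card_pos.ne'
    rw [hall] at this
    exact_mod_cast left_ne_zero_of_mul this
  have hT' : (T : ℝ) ^ L ≠ 0 := pow_ne_zero L (Nat.cast_ne_zero.2 hT.ne')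
  rw [card_filter_card_positiveTests_eq_and_compSucceeds, hall, h𝒦]
  push_cast [Nat.pow_le_pow_left hm L]
  rw [mul_div_mul_left _ _ hD, ← div_pow, sub_div, div_self hT', div_pow]
end
end

section
/- The Bernoulli-design maximum rate expression and the constant-column-weight COMP rate compare as follows: ln 2 · (1-θ) > max_{ν>0} min{ (ν e^{-ν}/ln 2)·(1-θ)/θ , h(e^{-ν}) } for all θ ∈ (1/(e·(ln 2)²), 1), where h is the binary entropy function h(p) = -p log₂ p - (1-p) log₂(1-p). -/
/-!
Each term of the supremum is at most its first argument, and `ν e^{-ν} ≤ e^{-1}`, so the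
supremum is at most `(e^{-1} / ln 2) · (1 - θ)/θ`. Dividing by `ln 2 · (1 - θ) > 0`, this bound
is below `ln 2 · (1 - θ)` exactly when `θ > 1/(e (ln 2)²)`.
-/

open Real

/-- Binary entropy with base-2 logarithms. -/
noncomputable def binH (p : ℝ) : ℝ := -p * Real.logb 2 p - (1 - p) * Real.logb 2 (1 - p)

theorem exp_neg_one_div_log_two_mul_lt {θ : ℝ}
    (hθl : 1 / (exp 1 * log 2 ^ 2) < θ) (hθu : θ < 1) :
    exp (-1) / log 2 * ((1 - θ) / θ) < log 2 * (1 - θ) := by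
  have hlog2 : 0 < log 2 := log_pos one_lt_two
  have hθ : 0 < θ := lt_trans (by positivity) hθl
  have hexp : exp (-1) < θ * log 2 ^ 2 := by
    rw [exp_neg, ← one_div, div_lt_iff₀ (exp_pos 1)]
    rw [div_lt_iff₀ (by positivity)] at hθl
    linarith
  rw [div_mul_div_comm, div_lt_iff₀ (by positivity)]
  nlinarith [sub_pos.mpr hθu]

/-- For `θ ∈ (1/(e (ln 2)²), 1)`, the constant column weight COMP rate `ln 2 · (1-θ)`
strictly exceeds the Bernoulli-design capacity
`max_{ν>0} min{ (ν e^{-ν}/ln 2)(1-θ)/θ, h(e^{-ν}) }`. -/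
theorem ccw_beats_bernoulli_capacity (θ : ℝ)
    (hθl : 1 / (Real.exp 1 * (Real.log 2) ^ 2) < θ) (hθu : θ < 1) :
    (⨆ ν : {ν : ℝ // 0 < ν},
        min ((↑ν * Real.exp (-↑ν) / Real.log 2) * ((1 - θ) / θ)) (binH (Real.exp (-↑ν))))
      < Real.log 2 * (1 - θ) := by
  have hlog2 : 0 < log 2 := log_pos one_lt_two
  have hθ : 0 < θ := lt_trans (by positivity) hθl
  have : Nonempty {ν : ℝ // 0 < ν} := ⟨⟨1, one_pos⟩⟩
  calc (⨆ ν : {ν : ℝ // 0 < ν},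
          min ((↑ν * exp (-↑ν) / log 2) * ((1 - θ) / θ)) (binH (exp (-↑ν))))
      ≤ exp (-1) / log 2 * ((1 - θ) / θ) := ciSup_le fun ν ↦ (min_le_left _ _).trans <| by
        have : 0 ≤ (1 - θ) / θ := div_nonneg (sub_nonneg.mpr hθu.le) hθ.le
        gcongr
        exact mul_exp_neg_le_exp_neg_one ν
    _ < log 2 * (1 - θ) := exp_neg_one_div_log_two_mul_lt hθl hθu
end
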